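/- arXiv:2507.03512 — 9 statements merged into one kernel-verified Lean document; each statement's English description precedes it below -/
import Mathlib

section
/- Fix G ∈ [0, 1/2]. Then the set {Q(ω) : ω ∈ ℝ⁴, ω_p ≥ 0 for all p, ω₀+ω₁+ω₂+ω₃ = 1, g(ω) = G} has greatest element 8(1 + √(1 − (1 − 2G)²)). In other words, the quantum Fisher information maximized over all two-qubit probe weights with generalized geometric measure fixed at G equals Q^G = 8(1 + √(1 − (1 − 2G)²)), and this value is attained. -/
/-!
Write `x = ω₀ + ω₃` and `u = 2√(ω₀ω₃)`. Then `Q = 16x(1 - x) + 16u²`, and AM-GM gives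
`u ≤ x` and `2√(ω₁ω₂) ≤ 1 - x`. Fixing the GGM at `G` fixes
`|2√(ω₁ω₂) - 2√(ω₀ω₃)| = d := √(1 - (1 - 2G)²)`, so also `u ≤ 1 - x + d`. Under these two
constraints `16x(1 - x) + 16u²` is at most `8(1 + d)`, with equality at `x = (1 + d)/2`,
`u = x`, which is realised by the probe with weights `((1+d)/4, (1-d)/4, (1-d)/4, (1+d)/4)`.
-/

/-- Quantum Fisher information `Q(ω) = 16(ω₀+ω₃) − 16(ω₃−ω₀)²` of the two-qubit probe
`|ψ⟩ = Σ_p √ω_p |p⟩` under the generator `h = σ_z⊗I + I⊗σ_z`. -/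
noncomputable def QFI (ω : Fin 4 → ℝ) : ℝ :=
  16 * (ω 0 + ω 3) - 16 * (ω 3 - ω 0) ^ 2

/-- Generalized geometric measure of entanglement
`g(ω) = (1 − √(1 − 4(√(ω₁ω₂) − √(ω₀ω₃))²))/2`. -/
noncomputable def GGM (ω : Fin 4 → ℝ) : ℝ :=
  (1 - Real.sqrt (1 - 4 * (Real.sqrt (ω 1 * ω 2) - Real.sqrt (ω 0 * ω 3)) ^ 2)) / 2

/-- Binary entropy `H(p) = −p log₂ p − (1−p) log₂ (1−p)` (with `0 log₂ 0 = 0`,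
which holds automatically since `Real.logb 2 0 = 0`). -/
noncomputable def binEnt (p : ℝ) : ℝ :=
  -(p * Real.logb 2 p) - (1 - p) * Real.logb 2 (1 - p)

/-- Von Neumann entanglement entropy of the probe, `S(ω) = H(g(ω))`. -/
noncomputable def entEntropy (ω : Fin 4 → ℝ) : ℝ :=
  binEnt (GGM ω)

lemma two_mul_sqrt_mul_le_add {a b : ℝ} (ha : 0 ≤ a) (hb : 0 ≤ b) :
    2 * √(a * b) ≤ a + b := by
  nlinarith [Real.sq_sqrt (mul_nonneg ha hb), Real.sqrt_nonneg (a * b), sq_nonneg (a - b)]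

lemma mul_one_sub_add_sq_le {x u d : ℝ} (hd : 0 ≤ d) (hu : 0 ≤ u) (hux : u ≤ x)
    (hud : u ≤ 1 - x + d) :
    16 * x * (1 - x) + 16 * u ^ 2 ≤ 8 * (1 + d) := by
  rcases le_or_gt (2 * x) (1 + d) with hx | hx
  · nlinarith [mul_le_mul hux hux hu (hu.trans hux)]
  · nlinarith [mul_le_mul hud hud hu (hu.trans hud), mul_le_mul_of_nonneg_left hx.le hd]

lemma QFI_eq (ω : Fin 4 → ℝ) :
    QFI ω = 16 * (ω 0 + ω 3) * (1 - (ω 0 + ω 3)) + 64 * (ω 0 * ω 3) := by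
  unfold QFI
  ring

lemma one_sub_two_mul_GGM (ω : Fin 4 → ℝ) :
    1 - 2 * GGM ω = √(1 - 4 * (√(ω 1 * ω 2) - √(ω 0 * ω 3)) ^ 2) := by
  unfold GGM
  ring

lemma QFI_le_of_nonneg_of_sum_eq_one {ω : Fin 4 → ℝ} (hω : ∀ p, 0 ≤ ω p) (hsum : ∑ p, ω p = 1) :
    QFI ω ≤ 8 * (1 + √(1 - (1 - 2 * GGM ω) ^ 2)) := by
  rw [Fin.sum_univ_four] at hsum
  set s := √(ω 0 * ω 3)
  set t := √(ω 1 * ω 2)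
  have hs : 2 * s ≤ ω 0 + ω 3 := two_mul_sqrt_mul_le_add (hω 0) (hω 3)
  have ht : 2 * t ≤ ω 1 + ω 2 := two_mul_sqrt_mul_le_add (hω 1) (hω 2)
  have hs0 : 0 ≤ s := Real.sqrt_nonneg _
  have ht0 : 0 ≤ t := Real.sqrt_nonneg _
  have hgap : 1 - (1 - 2 * GGM ω) ^ 2 = (2 * (t - s)) ^ 2 := by
    rw [one_sub_two_mul_GGM, Real.sq_sqrt (by nlinarith)]
    ring
  have hsd : 2 * s ≤ 1 - (ω 0 + ω 3) + √(1 - (1 - 2 * GGM ω) ^ 2) := by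
    rw [hgap, Real.sqrt_sq_eq_abs]
    linarith [neg_abs_le (2 * (t - s))]
  rw [QFI_eq, ← Real.sq_sqrt (mul_nonneg (hω 0) (hω 3))]
  linarith [mul_one_sub_add_sq_le (Real.sqrt_nonneg _) (by positivity) hs hsd]

noncomputable def optimalProbe (d : ℝ) : Fin 4 → ℝ :=
  ![(1 + d) / 4, (1 - d) / 4, (1 - d) / 4, (1 + d) / 4]

lemma optimalProbe_nonneg {d : ℝ} (hd₀ : 0 ≤ d) (hd₁ : d ≤ 1) (p : Fin 4) :
    0 ≤ optimalProbe d p := by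
  fin_cases p <;>
    simp only [optimalProbe, Fin.zero_eta, Fin.mk_one, Fin.reduceFinMk, Matrix.cons_val] <;>
    linarith

lemma sum_optimalProbe (d : ℝ) : ∑ p, optimalProbe d p = 1 := by
  simp only [optimalProbe, Fin.sum_univ_four, Fin.isValue, Matrix.cons_val]
  ring

lemma GGM_optimalProbe {d : ℝ} (hd₀ : 0 ≤ d) (hd₁ : d ≤ 1) :
    GGM (optimalProbe d) = (1 - √(1 - d ^ 2)) / 2 := by
  have hsq (y : ℝ) (hy : 0 ≤ y) : √(y * y) = y := Real.sqrt_mul_self hy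
  simp only [GGM, optimalProbe, Matrix.cons_val, hsq _ (by linarith : 0 ≤ (1 - d) / 4),
    hsq _ (by linarith : 0 ≤ (1 + d) / 4)]
  ring_nf

lemma QFI_optimalProbe (d : ℝ) : QFI (optimalProbe d) = 8 * (1 + d) := by
  simp only [QFI, optimalProbe, Fin.isValue, Matrix.cons_val]
  ring

/-- For fixed `G ∈ [0, 1/2]`, the QFI maximized over all two-qubit probe
weights with GGM fixed at `G` equals `8(1 + √(1 − (1 − 2G)²))`, and this value is attained. -/
theorem qfi_constrained_ggm_two_qubits (G : ℝ) (hG : G ∈ Set.Icc (0 : ℝ) (1 / 2)) :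
    IsGreatest
      {q : ℝ | ∃ ω : Fin 4 → ℝ, (∀ p, 0 ≤ ω p) ∧ (∑ p, ω p) = 1 ∧ GGM ω = G ∧ q = QFI ω}
      (8 * (1 + Real.sqrt (1 - (1 - 2 * G) ^ 2))) := by
  obtain ⟨hG₀, hG₁⟩ := hG
  set d := √(1 - (1 - 2 * G) ^ 2)
  have hd_sq : d ^ 2 = 1 - (1 - 2 * G) ^ 2 := Real.sq_sqrt (by nlinarith)
  have hd₀ : 0 ≤ d := Real.sqrt_nonneg _
  have hd₁ : d ≤ 1 := by nlinarith
  refine ⟨⟨optimalProbe d, optimalProbe_nonneg hd₀ hd₁, sum_optimalProbe d, ?_,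
    (QFI_optimalProbe d).symm⟩, ?_⟩
  · rw [GGM_optimalProbe hd₀ hd₁, hd_sq, sub_sub_cancel, Real.sqrt_sq (by linarith)]
    ring
  · rintro q ⟨ω, hω, hsum, rfl, rfl⟩
    exact QFI_le_of_nonneg_of_sum_eq_one hω hsum
end

section
/- Fix G ∈ [0, 1/2] and set x := √(1 − (1 − 2G)²). Then the weights ω with ω₀ = ω₃ = (1 + x)/4 and ω₁ = ω₂ = (1 − x)/4 are nonnegative, sum to 1, satisfy g(ω) = G, and attain Q(ω) = 8(1 + x); moreover Q(ω') ≤ 8(1 + x) for every admissible weight vector ω' with g(ω') = G. (Equivalently, the state |ψ^o(G)⟩ = √((1+x)/4)(|00⟩+|11⟩) + √((1−x)/4)(|01⟩+|10⟩) is an optimal probe at fixed GGM G.) -/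
/-!
Write `A = √(ω₀ω₃)`, `B = √(ω₁ω₂)` and `C = 2|A − B|` (the concurrence of the probe), so that
`g = (1 − √(1 − C²))/2`; on the simplex `C ≤ 1`, hence fixing `g = G` fixes `C = x`.
With `s = ω₀ + ω₃` one has `Q = 16 (s(1 − s) + (2A)²)`, and AM–GM gives `2A ≤ s` and
`2A ≤ C + 2B ≤ x + (1 − s)`. Maximising over these two constraints yields `Q ≤ 8(1 + x)`,
with equality at `s = (1 + x)/2`, `2A = s`, `B = (1 − s)/2`, which is the stated probe.
-/

namespace TwoQubitProbe

open Real

noncomputable def concurrence (ω : Fin 4 → ℝ) : ℝ :=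
  2 * |√(ω 0 * ω 3) - √(ω 1 * ω 2)|

noncomputable def probe (x : ℝ) : Fin 4 → ℝ :=
  ![(1 + x) / 4, (1 - x) / 4, (1 - x) / 4, (1 + x) / 4]

lemma two_mul_sqrt_mul_le_add {a d : ℝ} (ha : 0 ≤ a) (hd : 0 ≤ d) : 2 * √(a * d) ≤ a + d := by
  rw [sqrt_mul ha]
  nlinarith [sq_nonneg (√a - √d), sq_sqrt ha, sq_sqrt hd]

lemma sqrt_one_sub_sq_sqrt_one_sub_sq {c : ℝ} (hc₀ : 0 ≤ c) (hc₁ : c ≤ 1) :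
    √(1 - √(1 - c ^ 2) ^ 2) = c := by
  rw [sq_sqrt (by nlinarith), sub_sub_cancel, sqrt_sq hc₀]

lemma mul_one_sub_add_sq_le {s t x : ℝ} (hx : 0 ≤ x) (ht : 0 ≤ t) (hts : t ≤ s)
    (htx : t ≤ 1 + x - s) : s * (1 - s) + t ^ 2 ≤ (1 + x) / 2 := by
  rcases le_or_gt (2 * s) (1 + x) with hs | hs
  · nlinarith [mul_le_mul hts hts ht (ht.trans hts)]
  · nlinarith [mul_le_mul htx htx ht (ht.trans htx), mul_nonneg (by linarith : 0 ≤ 2 * s - (1 + x))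
      (by linarith : 0 ≤ 1 + 2 * x)]

lemma concurrence_nonneg (ω : Fin 4 → ℝ) : 0 ≤ concurrence ω := by
  unfold concurrence
  positivity

lemma GGM_eq_concurrence (ω : Fin 4 → ℝ) : GGM ω = (1 - √(1 - concurrence ω ^ 2)) / 2 := by
  simp only [GGM, concurrence, mul_pow, sq_abs]
  ring_nf

section Simplex

variable {ω : Fin 4 → ℝ} (hω : ∀ p, 0 ≤ ω p) (hsum : ∑ p, ω p = 1)
include hω hsum

lemma concurrence_le_one : concurrence ω ≤ 1 := by
  rw [Fin.sum_univ_four] at hsum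
  have hA := two_mul_sqrt_mul_le_add (hω 0) (hω 3)
  have hB := two_mul_sqrt_mul_le_add (hω 1) (hω 2)
  have hA₀ := sqrt_nonneg (ω 0 * ω 3)
  have hB₀ := sqrt_nonneg (ω 1 * ω 2)
  have h : |√(ω 0 * ω 3) - √(ω 1 * ω 2)| ≤ 1 / 2 := abs_le.mpr ⟨by linarith, by linarith⟩
  rw [concurrence]
  linarith

lemma concurrence_eq_sqrt_GGM : concurrence ω = √(1 - (1 - 2 * GGM ω) ^ 2) := by
  rw [GGM_eq_concurrence, show 1 - 2 * ((1 - √(1 - concurrence ω ^ 2)) / 2) =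
    √(1 - concurrence ω ^ 2) by ring,
    sqrt_one_sub_sq_sqrt_one_sub_sq (concurrence_nonneg ω) (concurrence_le_one hω hsum)]

lemma QFI_le_concurrence : QFI ω ≤ 8 * (1 + concurrence ω) := by
  rw [Fin.sum_univ_four] at hsum
  set A := √(ω 0 * ω 3)
  set B := √(ω 1 * ω 2)
  have hA : 2 * A ≤ ω 0 + ω 3 := two_mul_sqrt_mul_le_add (hω 0) (hω 3)
  have hB : 2 * B ≤ ω 1 + ω 2 := two_mul_sqrt_mul_le_add (hω 1) (hω 2)
  have hAB : 2 * (A - B) ≤ concurrence ω := by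
    rw [concurrence]
    linarith [le_abs_self (A - B)]
  have hQ : QFI ω = 16 * ((ω 0 + ω 3) * (1 - (ω 0 + ω 3)) + (2 * A) ^ 2) := by
    rw [QFI, mul_pow, sq_sqrt (mul_nonneg (hω 0) (hω 3))]
    ring
  have := mul_one_sub_add_sq_le (concurrence_nonneg ω) (by positivity) hA
    (by linarith [sqrt_nonneg (ω 1 * ω 2)])
  linarith

end Simplex

section Probe

variable {x : ℝ} (hx₀ : 0 ≤ x) (hx₁ : x ≤ 1)
include hx₀ hx₁

lemma probe_nonneg : ∀ p, 0 ≤ probe x p := by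
  intro p
  fin_cases p <;>
    simp only [probe, Fin.zero_eta, Fin.mk_one, Fin.reduceFinMk, Matrix.cons_val] <;> linarith

lemma concurrence_probe : concurrence (probe x) = x := by
  have h (y : ℝ) (hy : 0 ≤ y) : √(y / 4 * (y / 4)) = y / 4 := sqrt_mul_self (by positivity)
  simp only [concurrence, probe, Matrix.cons_val, h (1 + x) (by linarith), h (1 - x) (by linarith)]
  rw [show (1 + x) / 4 - (1 - x) / 4 = x / 2 by ring, abs_of_nonneg (by positivity)]
  ring

end Probe

lemma sum_probe (x : ℝ) : ∑ p, probe x p = 1 := by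
  simp only [Fin.sum_univ_four, probe, Matrix.cons_val]
  ring

lemma QFI_probe (x : ℝ) : QFI (probe x) = 8 * (1 + x) := by
  simp only [QFI, probe, Matrix.cons_val]
  ring

end TwoQubitProbe

open TwoQubitProbe in
/-- For `G ∈ [0, 1/2]` and `x = √(1 − (1 − 2G)²)`, the weights
`ω₀ = ω₃ = (1+x)/4`, `ω₁ = ω₂ = (1−x)/4` are admissible, have GGM `G`, attain
`Q(ω) = 8(1+x)`, and no admissible weight vector with GGM `G` does better. -/
theorem optimal_probe_fixed_ggm_two_qubits (G x : ℝ) (hG : G ∈ Set.Icc (0 : ℝ) (1 / 2))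
    (hx : x = Real.sqrt (1 - (1 - 2 * G) ^ 2)) (ω : Fin 4 → ℝ)
    (hω : ω = ![(1 + x) / 4, (1 - x) / 4, (1 - x) / 4, (1 + x) / 4]) :
    (∀ p, 0 ≤ ω p) ∧ (∑ p, ω p) = 1 ∧ GGM ω = G ∧ QFI ω = 8 * (1 + x) ∧
      ∀ ω' : Fin 4 → ℝ, (∀ p, 0 ≤ ω' p) → (∑ p, ω' p) = 1 → GGM ω' = G →
        QFI ω' ≤ 8 * (1 + x) := by
  change ω = probe x at hω
  subst hω
  obtain ⟨hG₀, hG₁⟩ := hG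
  have hx₀ : 0 ≤ x := hx ▸ Real.sqrt_nonneg _
  have hx₁ : x ≤ 1 := by
    rw [hx, Real.sqrt_le_one]
    nlinarith
  have hGx : Real.sqrt (1 - x ^ 2) = 1 - 2 * G := by
    rw [hx, sqrt_one_sub_sq_sqrt_one_sub_sq (by linarith) (by linarith)]
  refine ⟨probe_nonneg hx₀ hx₁, sum_probe x, ?_, QFI_probe x, ?_⟩
  · rw [GGM_eq_concurrence, concurrence_probe hx₀ hx₁, hGx]
    ring
  · intro ω' hω' hsum hGω'
    rw [hx, ← hGω', ← concurrence_eq_sqrt_GGM hω' hsum]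
    exact QFI_le_concurrence hω' hsum
end

section
/- Fix S ∈ [0, 1] and let Q_S := sup {Q(ω) : ω ∈ ℝ⁴, ω_p ≥ 0, ω₀+ω₁+ω₂+ω₃ = 1, S(ω) = S} be the quantum Fisher information maximized over all two-qubit probe weights with entanglement entropy fixed at S. Then 8 ≤ Q_S ≤ 16, the supremum is attained, and S = H(λ) where λ := (1 − √(1 − (1 − Q_S/8)²))/2. -/
/-!
Write `a = √(ω₀ω₃)`, `b = √(ω₁ω₂)` and let `C = 2|a - b|` be the concurrence of the probe.
Then `g = (1 - √(1 - C²))/2 ∈ [0, 1/2]` and `g(1 - g) = C²/4`. Since `H` is strictly increasing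
on `[0, 1/2]`, the constraint `H(g) = S` pins down `g = μ`, the unique `μ ∈ [0, 1/2]` with
`H(μ) = S`, hence `C = 2√(μ(1 - μ))`. On the simplex, AM–GM gives `Q ≤ 8 + 8C`, with equality at
`ω = ((1 + C)/4, (1 - C)/4, (1 - C)/4, (1 + C)/4)`. So `Q_S = 8 + 8C ∈ [8, 16]` is attained, and
`(1 - Q_S/8)² = C²` gives `λ = μ`.
-/

open Set

lemma binEnt_eq_binEntropy_div_log (p : ℝ) : binEnt p = Real.binEntropy p / Real.log 2 := by
  unfold binEnt Real.binEntropy Real.logb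
  rw [Real.log_inv, Real.log_inv]
  ring

lemma continuous_binEnt : Continuous binEnt := by
  simp only [funext binEnt_eq_binEntropy_div_log]
  exact Real.binEntropy_continuous.div_const _

lemma binEnt_strictMonoOn : StrictMonoOn binEnt (Icc 0 2⁻¹) := by
  intro x hx y hy hxy
  simp only [binEnt_eq_binEntropy_div_log]
  exact div_lt_div_of_pos_right (Real.binEntropy_strictMonoOn hx hy hxy)
    (Real.log_pos one_lt_two)

lemma exists_binEnt_eq {S : ℝ} (hS : S ∈ Icc (0 : ℝ) 1) : ∃ μ ∈ Icc (0 : ℝ) 2⁻¹, binEnt μ = S := by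
  have hS' : S ∈ Icc (binEnt 0) (binEnt 2⁻¹) := by
    simpa [binEnt_eq_binEntropy_div_log, Real.log_pos one_lt_two |>.ne'] using hS
  exact intermediate_value_Icc (by norm_num) continuous_binEnt.continuousOn hS'

/-- The generalized geometric measure as a function of the concurrence `C`. -/
noncomputable def ggmOfConcurrence (C : ℝ) : ℝ :=
  (1 - Real.sqrt (1 - C ^ 2)) / 2

lemma ggmOfConcurrence_mem_Icc (C : ℝ) : ggmOfConcurrence C ∈ Icc (0 : ℝ) 2⁻¹ := by
  have h0 : 0 ≤ Real.sqrt (1 - C ^ 2) := Real.sqrt_nonneg _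
  have h1 : Real.sqrt (1 - C ^ 2) ≤ 1 := Real.sqrt_le_one.2 (by nlinarith)
  constructor <;> unfold ggmOfConcurrence <;> linarith

lemma ggmOfConcurrence_mul_one_sub {C : ℝ} (hC : C ^ 2 ≤ 1) :
    ggmOfConcurrence C * (1 - ggmOfConcurrence C) = C ^ 2 / 4 := by
  have h := Real.sq_sqrt (show 0 ≤ 1 - C ^ 2 by linarith)
  unfold ggmOfConcurrence
  linear_combination (-1 / 4 : ℝ) * h

lemma ggmOfConcurrence_two_mul_sqrt {μ : ℝ} (hμ : μ ∈ Icc (0 : ℝ) 2⁻¹) :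
    ggmOfConcurrence (2 * Real.sqrt (μ * (1 - μ))) = μ := by
  have hsq : (2 * Real.sqrt (μ * (1 - μ))) ^ 2 = 4 * (μ * (1 - μ)) := by
    rw [mul_pow, Real.sq_sqrt (by nlinarith [hμ.1, hμ.2])]
    norm_num
  have hsquare : 1 - 4 * (μ * (1 - μ)) = (1 - 2 * μ) ^ 2 := by ring
  rw [ggmOfConcurrence, hsq, hsquare, Real.sqrt_sq (by linarith [hμ.2])]
  ring

/-- Concurrence `2|det M|` of `|ψ⟩`, where `M = [[√ω₀, √ω₁], [√ω₂, √ω₃]]` is its coefficient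
matrix. -/
noncomputable def concurrence (ω : Fin 4 → ℝ) : ℝ :=
  2 * |Real.sqrt (ω 0 * ω 3) - Real.sqrt (ω 1 * ω 2)|

lemma GGM_eq_ggmOfConcurrence (ω : Fin 4 → ℝ) : GGM ω = ggmOfConcurrence (concurrence ω) := by
  have h : (2 * |Real.sqrt (ω 0 * ω 3) - Real.sqrt (ω 1 * ω 2)|) ^ 2
      = 4 * (Real.sqrt (ω 1 * ω 2) - Real.sqrt (ω 0 * ω 3)) ^ 2 := by
    rw [mul_pow, sq_abs]
    ring
  rw [GGM, ggmOfConcurrence, concurrence, h]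

lemma two_mul_sqrt_mul_le_add_s2 {x y : ℝ} (hx : 0 ≤ x) (hy : 0 ≤ y) :
    2 * Real.sqrt (x * y) ≤ x + y := by
  have h := two_mul_le_add_sq (Real.sqrt x) (Real.sqrt y)
  rwa [Real.sq_sqrt hx, Real.sq_sqrt hy, mul_assoc, ← Real.sqrt_mul hx] at h

section Simplex

variable {ω : Fin 4 → ℝ} (hpos : ∀ p, 0 ≤ ω p) (hsum : ∑ p, ω p = 1)
include hpos hsum

lemma concurrence_mem_Icc : concurrence ω ∈ Icc (0 : ℝ) 1 := by
  rw [Fin.sum_univ_four] at hsum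
  have ha := two_mul_sqrt_mul_le_add_s2 (hpos 0) (hpos 3)
  have hb := two_mul_sqrt_mul_le_add_s2 (hpos 1) (hpos 2)
  have ha0 := Real.sqrt_nonneg (ω 0 * ω 3)
  have hb0 := Real.sqrt_nonneg (ω 1 * ω 2)
  have h : |Real.sqrt (ω 0 * ω 3) - Real.sqrt (ω 1 * ω 2)| ≤ 1 / 2 :=
    abs_sub_le_iff.2 ⟨by linarith, by linarith⟩
  exact ⟨by unfold concurrence; positivity, by unfold concurrence; linarith⟩

/-- With `A = ω₀ + ω₃`, `a = √(ω₀ω₃)`, `b = √(ω₁ω₂)`: `Q = 16A - 16(A² - 4a²)`, and AM–GM gives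
`2a ≤ A`, `2b ≤ 1 - A`. If `a ≤ b`, then `4a² ≤ A(1 - A)`; if `b ≤ a`, split on `A + 2a ≥ 1/2`. -/
lemma QFI_le_eight_add_concurrence : QFI ω ≤ 8 + 8 * concurrence ω := by
  rw [Fin.sum_univ_four] at hsum
  set a := Real.sqrt (ω 0 * ω 3)
  set b := Real.sqrt (ω 1 * ω 2)
  set A := ω 0 + ω 3
  have ha : 0 ≤ a := Real.sqrt_nonneg _
  have hb : 0 ≤ b := Real.sqrt_nonneg _
  have h2a : 2 * a ≤ A := two_mul_sqrt_mul_le_add_s2 (hpos 0) (hpos 3)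
  have h2b : 2 * b ≤ 1 - A := by linarith [two_mul_sqrt_mul_le_add_s2 (hpos 1) (hpos 2)]
  have hQ : QFI ω = 16 * A - 16 * (A ^ 2 - 4 * a ^ 2) := by
    rw [QFI, Real.sq_sqrt (mul_nonneg (hpos 0) (hpos 3))]
    ring
  rw [hQ, concurrence]
  rcases le_total b a with hba | hab
  · rw [abs_of_nonneg (by linarith)]
    rcases le_total (1 / 2) (A + 2 * a) with hA | hA
    · nlinarith [mul_nonneg (sub_nonneg.2 h2a) (sub_nonneg.2 hA)]
    · nlinarith
  · rw [abs_of_nonpos (by linarith)]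
    nlinarith [mul_le_mul h2a (show 2 * a ≤ 1 - A by linarith) (by linarith) (by linarith)]

lemma concurrence_eq_of_entEntropy_eq {μ : ℝ} (hμ : μ ∈ Icc (0 : ℝ) 2⁻¹)
    (h : entEntropy ω = binEnt μ) : concurrence ω = 2 * Real.sqrt (μ * (1 - μ)) := by
  have hC := concurrence_mem_Icc hpos hsum
  rw [entEntropy, GGM_eq_ggmOfConcurrence] at h
  have hg : ggmOfConcurrence (concurrence ω) = μ :=
    binEnt_strictMonoOn.injOn (ggmOfConcurrence_mem_Icc _) hμ h
  have hprod := ggmOfConcurrence_mul_one_sub (C := concurrence ω) (by nlinarith [hC.1, hC.2])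
  rw [hg, show concurrence ω ^ 2 / 4 = (concurrence ω / 2) ^ 2 by ring] at hprod
  rw [hprod, Real.sqrt_sq (by linarith [hC.1])]
  ring

end Simplex

lemma two_mul_sqrt_mul_one_sub_mem_Icc (μ : ℝ) : 2 * Real.sqrt (μ * (1 - μ)) ∈ Icc (0 : ℝ) 1 := by
  have h : Real.sqrt (μ * (1 - μ)) ≤ Real.sqrt ((1 / 2) ^ 2) :=
    Real.sqrt_le_sqrt (by nlinarith [sq_nonneg (2 * μ - 1)])
  rw [Real.sqrt_sq (by norm_num)] at h
  exact ⟨by positivity, by linarith⟩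

lemma exists_concurrence_eq_and_QFI_eq {C : ℝ} (hC : C ∈ Icc (0 : ℝ) 1) :
    ∃ ω : Fin 4 → ℝ, (∀ p, 0 ≤ ω p) ∧ ∑ p, ω p = 1 ∧ concurrence ω = C ∧ QFI ω = 8 + 8 * C := by
  obtain ⟨hC0, hC1⟩ := hC
  refine ⟨![(1 + C) / 4, (1 - C) / 4, (1 - C) / 4, (1 + C) / 4], ?_, ?_, ?_, ?_⟩
  · intro p
    fin_cases p <;>
      simp only [Fin.zero_eta, Fin.mk_one, Fin.reduceFinMk, Matrix.cons_val_zero,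
        Matrix.cons_val_one, Matrix.cons_val] <;> linarith
  · simp only [Fin.sum_univ_four, Matrix.cons_val_zero, Matrix.cons_val_one, Matrix.cons_val]
    ring
  · have h03 : (1 + C) / 4 * ((1 + C) / 4) = ((1 + C) / 4) ^ 2 := by ring
    have h12 : (1 - C) / 4 * ((1 - C) / 4) = ((1 - C) / 4) ^ 2 := by ring
    simp only [concurrence, Matrix.cons_val, h03, h12]
    rw [Real.sqrt_sq (by linarith), Real.sqrt_sq (by linarith),
      abs_of_nonneg (by linarith)]
    ring
  · simp only [QFI, Matrix.cons_val_zero, Matrix.cons_val]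
    ring

lemma isGreatest_QFI_of_entEntropy_eq {μ : ℝ} (hμ : μ ∈ Icc (0 : ℝ) 2⁻¹) :
    IsGreatest {q : ℝ | ∃ ω : Fin 4 → ℝ,
        (∀ p, 0 ≤ ω p) ∧ (∑ p, ω p) = 1 ∧ entEntropy ω = binEnt μ ∧ q = QFI ω}
      (8 + 8 * (2 * Real.sqrt (μ * (1 - μ)))) := by
  obtain ⟨ω, hpos, hsum, hC, hQ⟩ :=
    exists_concurrence_eq_and_QFI_eq (two_mul_sqrt_mul_one_sub_mem_Icc μ)
  refine ⟨⟨ω, hpos, hsum, ?_, hQ.symm⟩, ?_⟩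
  · rw [entEntropy, GGM_eq_ggmOfConcurrence, hC, ggmOfConcurrence_two_mul_sqrt hμ]
  · rintro q ⟨ω', hpos', hsum', hent, rfl⟩
    rw [← concurrence_eq_of_entEntropy_eq hpos' hsum' hμ hent]
    exact QFI_le_eight_add_concurrence hpos' hsum'

/-- For fixed `S ∈ [0, 1]`, the supremum `Q_S` of the QFI over all two-qubit
probe weights with entanglement entropy fixed at `S` satisfies `8 ≤ Q_S ≤ 16`, is attained,
and `S = H(λ)` with `λ = (1 − √(1 − (1 − Q_S/8)²))/2`. -/
theorem qfi_constrained_entropy_two_qubits (S : ℝ) (hS : S ∈ Set.Icc (0 : ℝ) 1) (QS : ℝ)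
    (hQS : QS = sSup
      {q : ℝ | ∃ ω : Fin 4 → ℝ,
        (∀ p, 0 ≤ ω p) ∧ (∑ p, ω p) = 1 ∧ entEntropy ω = S ∧ q = QFI ω}) :
    8 ≤ QS ∧ QS ≤ 16 ∧
      QS ∈ {q : ℝ | ∃ ω : Fin 4 → ℝ,
        (∀ p, 0 ≤ ω p) ∧ (∑ p, ω p) = 1 ∧ entEntropy ω = S ∧ q = QFI ω} ∧
      S = binEnt ((1 - Real.sqrt (1 - (1 - QS / 8) ^ 2)) / 2) := by
  obtain ⟨μ, hμ, rfl⟩ := exists_binEnt_eq hS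
  have hmax := isGreatest_QFI_of_entEntropy_eq hμ
  rw [hmax.csSup_eq] at hQS
  subst hQS
  set C := 2 * Real.sqrt (μ * (1 - μ))
  obtain ⟨hC0, hC1⟩ := two_mul_sqrt_mul_one_sub_mem_Icc μ
  refine ⟨by linarith, by linarith, hmax.1, ?_⟩
  have hsq : (1 - (8 + 8 * C) / 8) ^ 2 = C ^ 2 := by ring
  rw [hsq, ← ggmOfConcurrence, ggmOfConcurrence_two_mul_sqrt hμ]
end

section
/- Let ω = (ω₀, ω₁, ω₂, ω₃) be nonnegative reals summing to 1, and let ρ_A be the 2×2 real symmetric matrix with diagonal entries ω₀+ω₁ and ω₂+ω₃ and off-diagonal entries √(ω₀ω₂) + √(ω₁ω₃) (the reduced density matrix of the two-qubit state |ψ⟩ = Σ_p √ω_p |p⟩). Then the von Neumann entropy of ρ_A, i.e. −λ₁ log₂ λ₁ − λ₂ log₂ λ₂ where λ₁, λ₂ are the eigenvalues of ρ_A, equals H(p_s) with p_s = (1 − √(1 − 4(√(ω₁ω₂) − √(ω₀ω₃))²))/2. -/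
/-!
Writing `ψ = Σ_p √ω_p |p⟩` as the `2 × 2` coefficient matrix `M = (√ω_{2i+j})`, the reduced state
is `ρ_A = M Mᵀ`. Its trace is `Σ ω_p = 1` and its determinant is
`(det M)² = (√(ω₀ω₃) − √(ω₁ω₂))²`, so its two eigenvalues are the roots
`(1 ± √(1 − 4 det ρ_A))/2` of `λ² − λ + det ρ_A`, and the entropy of a pair `(p, 1 − p)` is `H(p)`.
-/

open Real Matrix

theorem binEnt_eq_of_add_eq_one {x y : ℝ} (h : x + y = 1) :
    binEnt x = -(x * logb 2 x + y * logb 2 y) := by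
  rw [binEnt, ← eq_sub_of_add_eq' h]
  ring

theorem binEnt_one_sub_sqrt_div_two {x y : ℝ} (h : x + y = 1) :
    binEnt ((1 - √(1 - 4 * (x * y))) / 2) = -(x * logb 2 x + y * logb 2 y) := by
  have hdisc : 1 - 4 * (x * y) = (x - y) ^ 2 := by linear_combination (-(1 + x + y)) * h
  rw [hdisc, sqrt_sq_eq_abs]
  rcases abs_cases (x - y) with ⟨habs, -⟩ | ⟨habs, -⟩
  · rw [habs, show (1 - (x - y)) / 2 = y by linarith,
      binEnt_eq_of_add_eq_one (y := x) (by linarith), add_comm]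
  · rw [habs, show (1 - -(x - y)) / 2 = x by linarith, binEnt_eq_of_add_eq_one h]

theorem Matrix.IsHermitian.neg_sum_eigenvalues_mul_logb_eq_binEnt {A : Matrix (Fin 2) (Fin 2) ℝ}
    (hA : A.IsHermitian) (htr : A.trace = 1) :
    -∑ i, hA.eigenvalues i * logb 2 (hA.eigenvalues i) =
      binEnt ((1 - √(1 - 4 * A.det)) / 2) := by
  have hsum : hA.eigenvalues 0 + hA.eigenvalues 1 = 1 := by
    simpa [Fin.sum_univ_two, htr] using hA.trace_eq_sum_eigenvalues.symm
  have hprod : A.det = hA.eigenvalues 0 * hA.eigenvalues 1 := by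
    simpa [Fin.prod_univ_two] using hA.det_eq_prod_eigenvalues
  rw [hprod, binEnt_one_sub_sqrt_div_two hsum, Fin.sum_univ_two]

theorem fin_two_eq_sqrt_mul_transpose_sqrt {a b c d : ℝ}
    (ha : 0 ≤ a) (hb : 0 ≤ b) (hc : 0 ≤ c) (hd : 0 ≤ d) :
    !![a + b, √(a * c) + √(b * d); √(a * c) + √(b * d), c + d] =
      !![√a, √b; √c, √d] * (!![√a, √b; √c, √d])ᵀ := by
  ext i j
  fin_cases i <;> fin_cases j <;>
    simp [mul_apply, sqrt_mul, ha, hb, hc, hd, mul_comm]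

/-- The von Neumann entropy `−λ₁ log₂ λ₁ − λ₂ log₂ λ₂` of the reduced density
matrix `ρ_A` of the two-qubit probe equals `H(p_s)` with
`p_s = (1 − √(1 − 4(√(ω₁ω₂) − √(ω₀ω₃))²))/2`. -/
theorem reduced_state_entropy_two_qubits (ω : Fin 4 → ℝ) (hpos : ∀ p, 0 ≤ ω p)
    (hsum : (∑ p, ω p) = 1) (ρA : Matrix (Fin 2) (Fin 2) ℝ)
    (hρ : ρA = !![ω 0 + ω 1, Real.sqrt (ω 0 * ω 2) + Real.sqrt (ω 1 * ω 3);
                  Real.sqrt (ω 0 * ω 2) + Real.sqrt (ω 1 * ω 3), ω 2 + ω 3])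
    (hA : ρA.IsHermitian) :
    (-∑ i, hA.eigenvalues i * Real.logb 2 (hA.eigenvalues i)) =
      binEnt ((1 - Real.sqrt (1 - 4 * (Real.sqrt (ω 1 * ω 2) - Real.sqrt (ω 0 * ω 3)) ^ 2)) / 2) := by
  have htr : ρA.trace = 1 := by
    rw [hρ, trace_fin_two_of, ← hsum, Fin.sum_univ_four]
    ring
  have hdet : ρA.det = (√(ω 1 * ω 2) - √(ω 0 * ω 3)) ^ 2 := by
    rw [hρ, fin_two_eq_sqrt_mul_transpose_sqrt (hpos 0) (hpos 1) (hpos 2) (hpos 3), det_mul,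
      det_transpose, det_fin_two_of, ← sqrt_mul (hpos 0), ← sqrt_mul (hpos 1)]
    ring
  rw [hA.neg_sum_eigenvalues_mul_logb_eq_binEnt htr, hdet]
end

section
/- Let G_f := (1 − √(3)/2)/2. The weight vectors ω^{(1)} = (1/8, 3/8, 3/8, 1/8) and ω^{(2)} = (3/8, 1/8, 1/8, 3/8) both lie in the probability simplex and both satisfy g(ω^{(1)}) = g(ω^{(2)}) = G_f, yet Q(ω^{(1)}) = 4 while Q(ω^{(2)}) = 12. Moreover ω^{(1)} satisfies (√ω₀ + √ω₃)² = 1/2 while ω^{(2)} satisfies (√ω₀ + √ω₃)² = 3/2, and Q(ω^{(2)}) > Q(ω^{(1)}). -/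
/-!
On the family `ω = (a, b, b, a)` the measure `g` depends on the weights only through
`(b − a)²`, so it is invariant under `a ↔ b`, whereas `Q = 32 a` is not. The two vectors are
exchanged by `a ↔ b` and have `(b − a)² = 1/16`, hence `g = (1 − √(3/4))/2 = G_f` for both,
while `Q` takes the values `32/8 = 4` and `32·3/8 = 12`.
-/

theorem symm_mem_simplex {a b : ℝ} (ha : 0 ≤ a) (hb : 0 ≤ b) (hab : a + b = 1 / 2) :
    (∀ p, 0 ≤ (![a, b, b, a] : Fin 4 → ℝ) p) ∧ ∑ p, (![a, b, b, a] : Fin 4 → ℝ) p = 1 := by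
  refine ⟨fun p => ?_, ?_⟩
  · fin_cases p <;> assumption
  · simp only [Fin.sum_univ_four, Matrix.cons_val_zero, Matrix.cons_val_one, Matrix.cons_val_two,
      Matrix.cons_val_three, Matrix.head_cons, Matrix.tail_cons]
    linarith

theorem QFI_symm (a b : ℝ) : QFI ![a, b, b, a] = 32 * a := by
  simp only [QFI, Matrix.cons_val_zero, Matrix.cons_val_three, Matrix.tail_cons,
    Matrix.head_cons]
  ring

theorem GGM_symm {a b : ℝ} (ha : 0 ≤ a) (hb : 0 ≤ b) :
    GGM ![a, b, b, a] = (1 - Real.sqrt (1 - 4 * (b - a) ^ 2)) / 2 := by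
  simp only [GGM, Matrix.cons_val_zero, Matrix.cons_val_one, Matrix.cons_val_two,
    Matrix.cons_val_three, Matrix.head_cons, Matrix.tail_cons,
    Real.sqrt_mul_self ha, Real.sqrt_mul_self hb]

theorem GGM_symm_of_sq_sub_eq {a b : ℝ} (ha : 0 ≤ a) (hb : 0 ≤ b) (hab : (b - a) ^ 2 = 1 / 16) :
    GGM ![a, b, b, a] = (1 - Real.sqrt 3 / 2) / 2 := by
  have h34 : Real.sqrt (3 / 4) = Real.sqrt 3 / 2 := by
    rw [Real.sqrt_div' _ (by norm_num : (0 : ℝ) ≤ 4),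
      show (4 : ℝ) = 2 ^ 2 by norm_num, Real.sqrt_sq zero_le_two]
  rw [GGM_symm ha hb, hab, ← h34]
  norm_num

theorem sqrt_add_sqrt_self_sq {x : ℝ} (hx : 0 ≤ x) : (Real.sqrt x + Real.sqrt x) ^ 2 = 4 * x := by
  rw [← two_mul, mul_pow, Real.sq_sqrt hx]
  norm_num

/-- At the special value `G_f = (1 − √3/2)/2`, the two weight vectors
`ω⁽¹⁾ = (1/8, 3/8, 3/8, 1/8)` and `ω⁽²⁾ = (3/8, 1/8, 1/8, 3/8)` both lie in the simplex and
have GGM `G_f`, yet `Q(ω⁽¹⁾) = 4` while `Q(ω⁽²⁾) = 12`; they satisfy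
`(√ω₀ + √ω₃)² = 1/2` and `3/2` respectively, and `Q(ω⁽²⁾) > Q(ω⁽¹⁾)`. -/
theorem special_ggm_two_branches (Gf : ℝ) (hGf : Gf = (1 - Real.sqrt 3 / 2) / 2)
    (ω₁ ω₂ : Fin 4 → ℝ) (hω₁ : ω₁ = ![1 / 8, 3 / 8, 3 / 8, 1 / 8])
    (hω₂ : ω₂ = ![3 / 8, 1 / 8, 1 / 8, 3 / 8]) :
    ((∀ p, 0 ≤ ω₁ p) ∧ (∑ p, ω₁ p) = 1) ∧
    ((∀ p, 0 ≤ ω₂ p) ∧ (∑ p, ω₂ p) = 1) ∧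
    GGM ω₁ = Gf ∧ GGM ω₂ = Gf ∧
    QFI ω₁ = 4 ∧ QFI ω₂ = 12 ∧
    (Real.sqrt (ω₁ 0) + Real.sqrt (ω₁ 3)) ^ 2 = 1 / 2 ∧
    (Real.sqrt (ω₂ 0) + Real.sqrt (ω₂ 3)) ^ 2 = 3 / 2 ∧
    QFI ω₁ < QFI ω₂ := by
  subst hGf hω₁ hω₂
  refine ⟨symm_mem_simplex (by norm_num) (by norm_num) (by norm_num),
    symm_mem_simplex (by norm_num) (by norm_num) (by norm_num),
    GGM_symm_of_sq_sub_eq (by norm_num) (by norm_num) (by norm_num),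
    GGM_symm_of_sq_sub_eq (by norm_num) (by norm_num) (by norm_num), ?_, ?_, ?_, ?_, ?_⟩
  · rw [QFI_symm]; norm_num
  · rw [QFI_symm]; norm_num
  · exact (sqrt_add_sqrt_self_sq (by norm_num : (0 : ℝ) ≤ 1 / 8)).trans (by norm_num)
  · exact (sqrt_add_sqrt_self_sq (by norm_num : (0 : ℝ) ≤ 3 / 8)).trans (by norm_num)
  · rw [QFI_symm, QFI_symm]; norm_num
end

section
/- Fix G ∈ (0, 1/2) and set x := √(1 − (1 − 2G)²). If ω lies in the probability simplex with ω₁ = 0 (or symmetrically ω₂ = 0), ω₀ = ω₃, and g(ω) = G, then Q(ω) = 16x = 16√(1 − (1 − 2G)²), and this value is strictly less than the interior optimum 8(1 + x). Hence no such boundary state attains the entanglement-constrained maximum of the quantum Fisher information. -/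
/-!
With `ω₁ω₂ = 0` and `ω₀ = ω₃ = a`, the GGM collapses to `(1 - √(1 - 4a²))/2`, which inverts to
`x = 2a`; the QFI is then `32a = 16x`, and `16x < 8(1 + x)` because `x < 1` for `G ≠ 1/2`.
-/

section ProbeWeights

variable {ω : Fin 4 → ℝ}

lemma GGM_eq_of_mul_eq_zero_of_eq (h12 : ω 1 * ω 2 = 0) (h03 : ω 0 = ω 3) :
    GGM ω = (1 - √(1 - 4 * ω 0 ^ 2)) / 2 := by
  rw [GGM, h12, ← h03, Real.sqrt_zero, Real.sqrt_mul_self_eq_abs, zero_sub, neg_sq, sq_abs]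

lemma QFI_eq_of_eq (h03 : ω 0 = ω 3) : QFI ω = 32 * ω 0 := by
  rw [QFI, ← h03]
  ring

end ProbeWeights

lemma sqrt_one_sub_sq_eq_two_abs_of_half_one_sub_sqrt_eq {a G : ℝ} (hG : G < 1 / 2)
    (h : (1 - √(1 - 4 * a ^ 2)) / 2 = G) : √(1 - (1 - 2 * G) ^ 2) = 2 * |a| := by
  have hsqrt : √(1 - 4 * a ^ 2) = 1 - 2 * G := by linarith
  have hsq : (1 - 2 * G) ^ 2 = 1 - 4 * a ^ 2 :=
    (sq _).trans ((Real.sqrt_eq_iff_mul_self_eq_of_pos (by linarith)).1 hsqrt)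
  rw [hsq, sub_sub_cancel, show 4 * a ^ 2 = (2 * a) ^ 2 by ring, Real.sqrt_sq_eq_abs, abs_mul,
    abs_two]

lemma sqrt_one_sub_sq_lt_one {t : ℝ} (ht : t ≠ 0) : √(1 - t ^ 2) < 1 :=
  (Real.sqrt_lt' one_pos).2 (by nlinarith [sq_pos_of_ne_zero ht])

theorem boundary_w1_zero_suboptimal_general (G x : ℝ) (hG : G ∈ Set.Ioo (0 : ℝ) (1 / 2))
    (hx : x = Real.sqrt (1 - (1 - 2 * G) ^ 2)) (ω : Fin 4 → ℝ) (hpos : ∀ p, 0 ≤ ω p)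
    (hzero : ω 1 = 0 ∨ ω 2 = 0) (h03 : ω 0 = ω 3)
    (hg : GGM ω = G) :
    QFI ω = 16 * x ∧
    QFI ω = 16 * Real.sqrt (1 - (1 - 2 * G) ^ 2) ∧
    QFI ω < 8 * (1 + x) := by
  have h12 : ω 1 * ω 2 = 0 := mul_eq_zero.2 hzero
  have hx_eq : x = 2 * ω 0 := by
    rw [hx, sqrt_one_sub_sq_eq_two_abs_of_half_one_sub_sqrt_eq hG.2
      ((GGM_eq_of_mul_eq_zero_of_eq h12 h03).symm.trans hg), abs_of_nonneg (hpos 0)]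
  have hQ : QFI ω = 16 * x := by rw [QFI_eq_of_eq h03, hx_eq]; ring
  have hx_lt : x < 1 := hx ▸ sqrt_one_sub_sq_lt_one (by linarith [hG.2])
  exact ⟨hQ, hx ▸ hQ, by linarith⟩

/-- For `G ∈ (0, 1/2)` and `x = √(1 − (1 − 2G)²)`, any simplex point with
`ω₁ = 0` (or symmetrically `ω₂ = 0`), `ω₀ = ω₃`, and GGM `G` has `Q(ω) = 16x`, strictly
less than the interior optimum `8(1 + x)`. -/
theorem boundary_w1_zero_suboptimal (G x : ℝ) (hG : G ∈ Set.Ioo (0 : ℝ) (1 / 2))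
    (hx : x = Real.sqrt (1 - (1 - 2 * G) ^ 2)) (ω : Fin 4 → ℝ) (hpos : ∀ p, 0 ≤ ω p)
    (hsum : (∑ p, ω p) = 1) (hzero : ω 1 = 0 ∨ ω 2 = 0) (h03 : ω 0 = ω 3)
    (hg : GGM ω = G) :
    QFI ω = 16 * x ∧
    QFI ω = 16 * Real.sqrt (1 - (1 - 2 * G) ^ 2) ∧
    QFI ω < 8 * (1 + x) :=
  boundary_w1_zero_suboptimal_general G x hG hx ω hpos hzero h03 hg
end

section
/- Fix G ∈ (0, 1/2) and set x := √(1 − (1 − 2G)²). If ω lies in the probability simplex with ω₁ = ω₂ = 0 and g(ω) = G, then Q(ω) = 16x² = 16(1 − (1 − 2G)²) = 64G(1 − G), and this value is strictly less than the interior optimum 8(1 + x). Hence no such boundary state attains the entanglement-constrained maximum of the quantum Fisher information. -/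
lemma QFI_eq_of_add_eq_one {ω : Fin 4 → ℝ} (hs : ω 0 + ω 3 = 1) :
    QFI ω = 16 * (1 - (ω 3 - ω 0) ^ 2) := by
  rw [QFI, hs]
  ring

lemma GGM_eq_of_w1_eq_zero {ω : Fin 4 → ℝ} (h1 : ω 1 = 0) (h0 : 0 ≤ ω 0) (h3 : 0 ≤ ω 3)
    (hs : ω 0 + ω 3 = 1) : GGM ω = (1 - |ω 3 - ω 0|) / 2 := by
  have hsq : 1 - 4 * (Real.sqrt (ω 1 * ω 2) - Real.sqrt (ω 0 * ω 3)) ^ 2 = (ω 3 - ω 0) ^ 2 := by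
    rw [h1, zero_mul, Real.sqrt_zero, zero_sub, neg_sq, Real.sq_sqrt (mul_nonneg h0 h3)]
    linear_combination (-(ω 0 + ω 3 + 1)) * hs
  rw [GGM, hsq, Real.sqrt_sq_eq_abs]

lemma sixteen_mul_sq_lt_eight_mul_one_add {x : ℝ} (hx₀ : -(1 / 2) < x) (hx₁ : x < 1) :
    16 * x ^ 2 < 8 * (1 + x) := by
  nlinarith [mul_pos (by linarith : (0 : ℝ) < 2 * x + 1) (by linarith : (0 : ℝ) < 1 - x)]

/-- For `G ∈ (0, 1/2)` and `x = √(1 − (1 − 2G)²)`, any simplex point with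
`ω₁ = ω₂ = 0` and GGM `G` has `Q(ω) = 16x² = 16(1 − (1 − 2G)²) = 64G(1 − G)`, strictly
less than the interior optimum `8(1 + x)`. -/
theorem boundary_w1_w2_zero_suboptimal (G x : ℝ) (hG : G ∈ Set.Ioo (0 : ℝ) (1 / 2))
    (hx : x = Real.sqrt (1 - (1 - 2 * G) ^ 2)) (ω : Fin 4 → ℝ) (hpos : ∀ p, 0 ≤ ω p)
    (hsum : (∑ p, ω p) = 1) (h1 : ω 1 = 0) (h2 : ω 2 = 0) (hg : GGM ω = G) :
    QFI ω = 16 * x ^ 2 ∧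
    QFI ω = 16 * (1 - (1 - 2 * G) ^ 2) ∧
    QFI ω = 64 * G * (1 - G) ∧
    QFI ω < 8 * (1 + x) := by
  obtain ⟨hG₀, hG₁⟩ := hG
  have hs : ω 0 + ω 3 = 1 := by simpa [Fin.sum_univ_four, h1, h2] using hsum
  have habs : |ω 3 - ω 0| = 1 - 2 * G := by
    rw [GGM_eq_of_w1_eq_zero h1 (hpos 0) (hpos 3) hs] at hg
    linarith
  have hQ : QFI ω = 16 * (1 - (1 - 2 * G) ^ 2) := by
    rw [QFI_eq_of_add_eq_one hs, ← sq_abs, habs]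
  have hx2 : x ^ 2 = 1 - (1 - 2 * G) ^ 2 := by
    rw [hx, Real.sq_sqrt]
    nlinarith
  have hx₁ : x < 1 := by
    rw [hx, Real.sqrt_lt' one_pos]
    nlinarith
  have hx₀ : 0 ≤ x := hx ▸ Real.sqrt_nonneg _
  refine ⟨hQ.trans (by rw [hx2]), hQ, hQ.trans (by ring), ?_⟩
  rw [hQ, ← hx2]
  exact sixteen_mul_sq_lt_eight_mul_one_add (by linarith) hx₁
end

section
/- If ω lies in the probability simplex with ω₁ = 0 and ω₃ = 1/2 − ω₀ (equivalently ω₂ = 1/2), then Q(ω) = 8 − 4(1 − 4ω₀)² ≤ 8; consequently, if g(ω) = G with G ∈ (0, 1/2), then Q(ω) is strictly less than the interior optimum 8(1 + √(1 − (1 − 2G)²)). -/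
lemma QFI_eq_of_add_eq_half {ω : Fin 4 → ℝ} (h3 : ω 3 = 1 / 2 - ω 0) :
    QFI ω = 8 - 4 * (1 - 4 * ω 0) ^ 2 := by
  rw [QFI, h3]
  ring

lemma QFI_le_eight_of_add_eq_half {ω : Fin 4 → ℝ} (h3 : ω 3 = 1 / 2 - ω 0) : QFI ω ≤ 8 := by
  rw [QFI_eq_of_add_eq_half h3]
  nlinarith [sq_nonneg (1 - 4 * ω 0)]

lemma eight_lt_interior_optimum {G : ℝ} (hG : G ∈ Set.Ioo (0 : ℝ) 1) :
    8 < 8 * (1 + Real.sqrt (1 - (1 - 2 * G) ^ 2)) := by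
  have hrad : 0 < 1 - (1 - 2 * G) ^ 2 := by nlinarith [hG.1, hG.2]
  have := Real.sqrt_pos.mpr hrad
  linarith

theorem boundary_w1_zero_w3_half_minus_w0_general (ω : Fin 4 → ℝ) (h3 : ω 3 = 1 / 2 - ω 0) :
    QFI ω = 8 - 4 * (1 - 4 * ω 0) ^ 2 ∧ QFI ω ≤ 8 ∧
      ∀ G ∈ Set.Ioo (0 : ℝ) (1 / 2), GGM ω = G →
        QFI ω < 8 * (1 + Real.sqrt (1 - (1 - 2 * G) ^ 2)) := by
  refine ⟨QFI_eq_of_add_eq_half h3, QFI_le_eight_of_add_eq_half h3, fun G hG _ => ?_⟩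
  exact (QFI_le_eight_of_add_eq_half h3).trans_lt
    (eight_lt_interior_optimum (Set.Ioo_subset_Ioo_right (by norm_num) hG))

/-- If `ω` lies in the simplex with `ω₁ = 0` and `ω₃ = 1/2 − ω₀`
(equivalently `ω₂ = 1/2`), then `Q(ω) = 8 − 4(1 − 4ω₀)² ≤ 8`; hence if `g(ω) = G` with
`G ∈ (0, 1/2)`, then `Q(ω)` is strictly below the interior optimum
`8(1 + √(1 − (1 − 2G)²))`. -/
theorem boundary_w1_zero_w3_half_minus_w0 (ω : Fin 4 → ℝ) (hpos : ∀ p, 0 ≤ ω p)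
    (hsum : (∑ p, ω p) = 1) (h1 : ω 1 = 0) (h3 : ω 3 = 1 / 2 - ω 0) :
    QFI ω = 8 - 4 * (1 - 4 * ω 0) ^ 2 ∧ QFI ω ≤ 8 ∧
      ∀ G ∈ Set.Ioo (0 : ℝ) (1 / 2), GGM ω = G →
        QFI ω < 8 * (1 + Real.sqrt (1 - (1 - 2 * G) ^ 2)) :=
  boundary_w1_zero_w3_half_minus_w0_general ω h3
end

section
/- Fix G ∈ (0, 1/2). Suppose ω lies in the open simplex (ω_p > 0 for all p, ω₀+ω₁+ω₂+ω₃ = 1), satisfies g(ω) = G, and is a local maximum of Q on the constraint set {ω' : ω'_p > 0, Σ ω'_p = 1, g(ω') = G}. Then ω₁ = ω₂ and (√ω₃ − √ω₀)(1 − 2(√ω₃ + √ω₀)²) = 0; in particular, if additionally G ≠ (1 − √(3)/2)/2, then ω₀ = ω₃. -/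
open Filter Topology

lemma IsLocalMaxOn.not_eventually_mem_and_lt {α X β : Type*} [TopologicalSpace X]
    [LinearOrder β] {f : X → β} {s : Set X} {a : X} {l : Filter α} [l.NeBot] {c : α → X}
    (hmax : IsLocalMaxOn f s a) (hc : Tendsto c l (𝓝 a)) :
    ¬ ∀ᶠ t in l, c t ∈ s ∧ f a < f (c t) := by
  intro h
  have hcs : Tendsto c l (𝓝[s] a) := tendsto_nhdsWithin_iff.2 ⟨hc, h.mono fun _ ht => ht.1⟩
  obtain ⟨t, hle, -, hlt⟩ := ((hcs.eventually hmax).and h).exists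
  exact hle.not_gt hlt

/-- Half the concurrence of the probe state, with a sign. -/
noncomputable def halfConcurrence (ω : Fin 4 → ℝ) : ℝ :=
  Real.sqrt (ω 1 * ω 2) - Real.sqrt (ω 0 * ω 3)

def ggmLevelSet (G : ℝ) : Set (Fin 4 → ℝ) :=
  {ω' | (∀ p, 0 < ω' p) ∧ (∑ p, ω' p) = 1 ∧ GGM ω' = G}

lemma GGM_eq_of_halfConcurrence_eq {ω ω' : Fin 4 → ℝ}
    (h : halfConcurrence ω' = halfConcurrence ω) : GGM ω' = GGM ω := by
  unfold GGM; rw [← halfConcurrence, ← halfConcurrence, h]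

lemma halfConcurrence_of_one_eq_two {ω : Fin 4 → ℝ} (h0 : 0 ≤ ω 0) (h1 : 0 ≤ ω 1)
    (h3 : 0 ≤ ω 3) (hsum : (∑ p, ω p) = 1) (h12 : ω 1 = ω 2) :
    halfConcurrence ω = (1 - (Real.sqrt (ω 3) + Real.sqrt (ω 0)) ^ 2) / 2 := by
  rw [Fin.sum_univ_four] at hsum
  rw [halfConcurrence, ← h12, Real.sqrt_mul_self h1, Real.sqrt_mul h0]
  nlinarith [Real.sq_sqrt h0, Real.sq_sqrt h3]

/-- `(s + pairGap a b s q) / 2` and `(s - pairGap a b s q) / 2` are the two numbers with sum `s`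
and product `q ^ 2`, ordered like `a` and `b`. -/
noncomputable def pairGap (a b s q : ℝ) : ℝ :=
  (a - b) * Real.sqrt ((s ^ 2 - 4 * q ^ 2) / (a - b) ^ 2)

lemma pairGap_sq {a b s q : ℝ} (hab : a ≠ b) (hq : 4 * q ^ 2 ≤ s ^ 2) :
    pairGap a b s q ^ 2 = s ^ 2 - 4 * q ^ 2 := by
  have hab' : (a - b) ^ 2 ≠ 0 := pow_ne_zero 2 (sub_ne_zero.2 hab)
  rw [pairGap, mul_pow, Real.sq_sqrt (div_nonneg (by linarith) (sq_nonneg _))]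
  field_simp

lemma pairGap_add_sqrt_mul {a b : ℝ} (ha : 0 ≤ a) (hb : 0 ≤ b) (hab : a ≠ b) :
    pairGap a b (a + b) (Real.sqrt (a * b)) = a - b := by
  have hab' : (a - b) ^ 2 ≠ 0 := pow_ne_zero 2 (sub_ne_zero.2 hab)
  rw [pairGap, Real.sq_sqrt (mul_nonneg ha hb),
    show (a + b) ^ 2 - 4 * (a * b) = (a - b) ^ 2 by ring, div_self hab', Real.sqrt_one, mul_one]

noncomputable def balancingCurve (ω : Fin 4 → ℝ) (ε : ℝ) : Fin 4 → ℝ :=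
  let s := ω 1 + ω 2 - 2 * ε
  let r := pairGap (ω 1) (ω 2) s (halfConcurrence ω + Real.sqrt ((ω 0 + ε) * (ω 3 + ε)))
  ![ω 0 + ε, (s + r) / 2, (s - r) / 2, ω 3 + ε]

lemma eq_one_two_of_isLocalMaxOn {G : ℝ} {ω : Fin 4 → ℝ} (hpos : ∀ p, 0 < ω p)
    (hsum : (∑ p, ω p) = 1) (hg : GGM ω = G) (hmax : IsLocalMaxOn QFI (ggmLevelSet G) ω) :
    ω 1 = ω 2 := by
  by_contra hne
  rw [Fin.sum_univ_four] at hsum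
  set κ := halfConcurrence ω
  set s : ℝ → ℝ := fun ε => ω 1 + ω 2 - 2 * ε
  set u : ℝ → ℝ := fun ε => κ + Real.sqrt ((ω 0 + ε) * (ω 3 + ε))
  have hcurve (ε : ℝ) : balancingCurve ω ε =
      ![ω 0 + ε, (s ε + pairGap (ω 1) (ω 2) (s ε) (u ε)) / 2,
        (s ε - pairGap (ω 1) (ω 2) (s ε) (u ε)) / 2, ω 3 + ε] := rfl
  have hs0 : s 0 = ω 1 + ω 2 := by simp [s]
  have hu0 : u 0 = Real.sqrt (ω 1 * ω 2) := by simp [u, κ, halfConcurrence]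
  have hcont : Continuous (balancingCurve ω) := by unfold balancingCurve pairGap; fun_prop
  have hc0 : balancingCurve ω 0 = ω := by
    rw [hcurve, hs0, hu0, pairGap_add_sqrt_mul (hpos 1).le (hpos 2).le hne]
    ext p; fin_cases p <;> simp
  refine hmax.not_eventually_mem_and_lt
    ((hc0 ▸ hcont.tendsto 0).mono_left (nhdsWithin_le_nhds (s := Set.Ioi 0))) ?_
  have hev : ∀ᶠ ε in 𝓝 (0 : ℝ), 0 < u ε ∧ 4 * u ε ^ 2 < s ε ^ 2 ∧ 0 < s ε := by
    refine (ContinuousAt.eventually_lt (by fun_prop) (by fun_prop) ?_).and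
      ((ContinuousAt.eventually_lt (by fun_prop) (by fun_prop) ?_).and
        (ContinuousAt.eventually_lt (by fun_prop) (by fun_prop) ?_))
    · simpa [hu0] using mul_pos (hpos 1) (hpos 2)
    · rw [hu0, hs0, Real.sq_sqrt (mul_pos (hpos 1) (hpos 2)).le]
      nlinarith [sq_pos_of_ne_zero (sub_ne_zero.2 hne)]
    · linarith [hpos 1, hpos 2]
  filter_upwards [hev.filter_mono nhdsWithin_le_nhds, self_mem_nhdsWithin]
    with ε ⟨hu, hus, hs⟩ (hε : 0 < ε)
  rw [hcurve]
  set r := pairGap (ω 1) (ω 2) (s ε) (u ε)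
  have hr : r ^ 2 = s ε ^ 2 - 4 * u ε ^ 2 := pairGap_sq hne hus.le
  obtain ⟨hr₁, hr₂⟩ := abs_lt.1 (abs_lt_of_sq_lt_sq (by rw [hr]; linarith [pow_pos hu 2]) hs.le)
  have hprod : (s ε + r) / 2 * ((s ε - r) / 2) = u ε ^ 2 := by linear_combination (-1/4) * hr
  refine ⟨⟨fun p => ?_, ?_, ?_⟩, ?_⟩
  · fin_cases p <;> simp <;> linarith [hpos 0, hpos 3]
  · simp [Fin.sum_univ_four, s]; linarith
  · rw [← hg]
    refine GGM_eq_of_halfConcurrence_eq ?_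
    show Real.sqrt ((s ε + r) / 2 * ((s ε - r) / 2)) - Real.sqrt ((ω 0 + ε) * (ω 3 + ε)) = κ
    rw [hprod, Real.sqrt_sq hu.le]
    ring
  · simp [QFI]; linarith

noncomputable def amplitudeShift (ω : Fin 4 → ℝ) (δ : ℝ) : Fin 4 → ℝ :=
  let x := Real.sqrt (ω 0) - δ
  let y := Real.sqrt (ω 3) + δ
  ![x ^ 2, (1 - x ^ 2 - y ^ 2) / 2, (1 - x ^ 2 - y ^ 2) / 2, y ^ 2]

lemma sqrt_stationary_of_isLocalMaxOn {G : ℝ} {ω : Fin 4 → ℝ} (hpos : ∀ p, 0 < ω p)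
    (hsum : (∑ p, ω p) = 1) (hg : GGM ω = G) (h12 : ω 1 = ω 2)
    (hmax : IsLocalMaxOn QFI (ggmLevelSet G) ω) :
    (Real.sqrt (ω 3) - Real.sqrt (ω 0)) * (1 - 2 * (Real.sqrt (ω 3) + Real.sqrt (ω 0)) ^ 2) = 0 := by
  have hκ := halfConcurrence_of_one_eq_two (hpos 0).le (hpos 1).le (hpos 3).le hsum h12
  set x := Real.sqrt (ω 0)
  set y := Real.sqrt (ω 3)
  have hx0 : 0 < x := Real.sqrt_pos.2 (hpos 0)
  have hy0 : 0 < y := Real.sqrt_pos.2 (hpos 3)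
  set K := (y - x) * (1 - 2 * (y + x) ^ 2)
  by_contra hK
  have hx : x ^ 2 = ω 0 := Real.sq_sqrt (hpos 0).le
  have hy : y ^ 2 = ω 3 := Real.sq_sqrt (hpos 3).le
  rw [Fin.sum_univ_four] at hsum
  have hcurve (ε : ℝ) : amplitudeShift ω (K * ε) = ![(x - K * ε) ^ 2,
      (1 - (x - K * ε) ^ 2 - (y + K * ε) ^ 2) / 2, (1 - (x - K * ε) ^ 2 - (y + K * ε) ^ 2) / 2,
      (y + K * ε) ^ 2] := rfl
  have hcont : Continuous fun ε => amplitudeShift ω (K * ε) := by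
    unfold amplitudeShift; fun_prop
  have hc0 : amplitudeShift ω (K * 0) = ω := by
    rw [hcurve]; ext p; fin_cases p <;> simp [hx, hy] <;> linarith
  refine hmax.not_eventually_mem_and_lt
    ((hc0 ▸ hcont.tendsto 0).mono_left (nhdsWithin_le_nhds (s := Set.Ioi 0))) ?_
  have hev : ∀ᶠ ε in 𝓝 (0 : ℝ), 0 < x - K * ε ∧ 0 < y + K * ε ∧
      0 < 1 - (x - K * ε) ^ 2 - (y + K * ε) ^ 2 ∧ 0 < 1 + (1 - 2 * (y + x) ^ 2) * ε := by
    refine (ContinuousAt.eventually_lt (by fun_prop) (by fun_prop) ?_).and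
      ((ContinuousAt.eventually_lt (by fun_prop) (by fun_prop) ?_).and
        ((ContinuousAt.eventually_lt (by fun_prop) (by fun_prop) ?_).and
          (ContinuousAt.eventually_lt (by fun_prop) (by fun_prop) ?_)))
    · simpa using hx0
    · simpa using hy0
    · simp only [mul_zero, sub_zero, add_zero, hx, hy]; linarith [hpos 1, hpos 2]
    · simp
  filter_upwards [hev.filter_mono nhdsWithin_le_nhds, self_mem_nhdsWithin]
    with ε ⟨hxε, hyε, hm, hlin⟩ (hε : 0 < ε)
  rw [hcurve]
  refine ⟨⟨fun p => ?_, ?_, ?_⟩, ?_⟩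
  · fin_cases p <;> simp <;> first | positivity | linarith
  · simp [Fin.sum_univ_four]; ring
  · rw [← hg]
    refine GGM_eq_of_halfConcurrence_eq ?_
    rw [halfConcurrence_of_one_eq_two (by simp; positivity) (by simp; positivity)
      (by simp; positivity) (by simp [Fin.sum_univ_four]; ring) (by simp), hκ]
    simp [Real.sqrt_sq hxε.le, Real.sqrt_sq hyε.le]
  · have hQ : QFI (![(x - K * ε) ^ 2, (1 - (x - K * ε) ^ 2 - (y + K * ε) ^ 2) / 2,
        (1 - (x - K * ε) ^ 2 - (y + K * ε) ^ 2) / 2, (y + K * ε) ^ 2]) - QFI ω =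
        32 * K ^ 2 * ε * (1 + (1 - 2 * (y + x) ^ 2) * ε) := by
      simp only [QFI, K, ← hx, ← hy]; simp; ring
    have : 0 < 32 * K ^ 2 * ε * (1 + (1 - 2 * (y + x) ^ 2) * ε) := by positivity
    linarith

lemma GGM_eq_of_sq_sqrt_add_eq_half {ω : Fin 4 → ℝ} (h0 : 0 ≤ ω 0) (h1 : 0 ≤ ω 1)
    (h3 : 0 ≤ ω 3) (hsum : (∑ p, ω p) = 1) (h12 : ω 1 = ω 2)
    (h : (Real.sqrt (ω 3) + Real.sqrt (ω 0)) ^ 2 = 1 / 2) :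
    GGM ω = (1 - Real.sqrt 3 / 2) / 2 := by
  have hκ : halfConcurrence ω = 1 / 4 := by
    rw [halfConcurrence_of_one_eq_two h0 h1 h3 hsum h12, h]; norm_num
  have h34 : Real.sqrt (3 / 4) = Real.sqrt 3 / 2 := by
    rw [Real.sqrt_div' _ (by norm_num), show (4 : ℝ) = 2 ^ 2 by norm_num,
      Real.sqrt_sq (by norm_num)]
  rw [GGM, ← halfConcurrence, hκ]
  norm_num [h34]

theorem interior_critical_point_structure_general (G : ℝ)
    (ω : Fin 4 → ℝ) (hpos : ∀ p, 0 < ω p) (hsum : (∑ p, ω p) = 1) (hg : GGM ω = G)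
    (hmax : IsLocalMaxOn QFI
      {ω' : Fin 4 → ℝ | (∀ p, 0 < ω' p) ∧ (∑ p, ω' p) = 1 ∧ GGM ω' = G} ω) :
    ω 1 = ω 2 ∧
    (Real.sqrt (ω 3) - Real.sqrt (ω 0)) *
      (1 - 2 * (Real.sqrt (ω 3) + Real.sqrt (ω 0)) ^ 2) = 0 ∧
    (G ≠ (1 - Real.sqrt 3 / 2) / 2 → ω 0 = ω 3) := by
  have h12 : ω 1 = ω 2 := eq_one_two_of_isLocalMaxOn hpos hsum hg hmax
  have hstat := sqrt_stationary_of_isLocalMaxOn hpos hsum hg h12 hmax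
  refine ⟨h12, hstat, fun hG => ?_⟩
  rcases mul_eq_zero.1 hstat with hdiff | hsq
  · exact ((Real.sqrt_inj (hpos 3).le (hpos 0).le).1 (sub_eq_zero.1 hdiff)).symm
  · refine absurd ?_ hG
    rw [← hg]
    exact GGM_eq_of_sq_sqrt_add_eq_half (hpos 0).le (hpos 1).le (hpos 3).le hsum h12 (by linarith)

/-- For `G ∈ (0, 1/2)`, any interior point of the simplex with `g(ω) = G`
which is a local maximum of `Q` on the constraint set
`{ω' : ω'_p > 0, Σω' = 1, g(ω') = G}` satisfies `ω₁ = ω₂` and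
`(√ω₃ − √ω₀)(1 − 2(√ω₃ + √ω₀)²) = 0`; in particular if `G ≠ (1 − √3/2)/2` then
`ω₀ = ω₃`. -/
theorem interior_critical_point_structure (G : ℝ) (hG : G ∈ Set.Ioo (0 : ℝ) (1 / 2))
    (ω : Fin 4 → ℝ) (hpos : ∀ p, 0 < ω p) (hsum : (∑ p, ω p) = 1) (hg : GGM ω = G)
    (hmax : IsLocalMaxOn QFI
      {ω' : Fin 4 → ℝ | (∀ p, 0 < ω' p) ∧ (∑ p, ω' p) = 1 ∧ GGM ω' = G} ω) :
    ω 1 = ω 2 ∧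
    (Real.sqrt (ω 3) - Real.sqrt (ω 0)) *
      (1 - 2 * (Real.sqrt (ω 3) + Real.sqrt (ω 0)) ^ 2) = 0 ∧
    (G ≠ (1 - Real.sqrt 3 / 2) / 2 → ω 0 = ω 3) :=
  interior_critical_point_structure_general G ω hpos hsum hg hmax
end
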